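/- arXiv:2306.12543 — 4 statements merged into one kernel-verified Lean document; each statement's English description precedes it below -/
import Mathlib

section
/- Let r ≥ 4 and t ≥ 3 be integers with r ≤ 2t−2, let K be a rank-r matroid on ground set [2t+2] in which every r-element subset is either a basis or a circuit-hyperplane and whose circuit-hyperplanes are exactly the members of 𝒞'(r,t) ∪ 𝒞''(r,t), let X = {2t+1, 2t+2}, let M = K/X and L = K∖X. Then: (a) for each i ∈ [t−1], C_i and C_{i+1} are circuits of M with |C_i ∪ C_{i+1}| − r_M(C_i ∪ C_{i+1}) = 2; (b) C₁ and C_t are circuits of M with |C₁ ∪ C_t| − r_M(C₁ ∪ C_t) = 2; (c) for each i ∈ [t−1], r_L(C_i ∪ C_{i+1}) − r_M(C_i ∪ C_{i+1}) = 1; and (d) r_L(C₁ ∪ C_t) − r_M(C₁ ∪ C_t) = 2. -/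
/-!
`K` is sparse paving of rank `r`, so every set of fewer than `r` elements is independent; in
particular `X` is, and contracting it lowers the rank of every spanning set by two. Each
`C_i ∪ X` is a circuit of `K`, hence `C_i` is a circuit of `K / X`. Every `r`-subset `A` of `[2t]`
spans `K` together with `X`: trading an element of `A` for `2t+1` gives an `r`-set meeting `X` in
one point, which lies in neither `𝒞'` nor `𝒞''` and so is a base. Hence `r_M(A) = r - 2` for
`A = C_i ∪ C_{i+1}` and `A = C₁ ∪ C_t`, both of size `r`. In `L` these sets keep their rank in
`K`: `C_i ∪ C_{i+1}` is a circuit of `K` (rank `r - 1`), whereas `C₁ ∪ C_t` is not a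
circuit-hyperplane and so is a base (rank `r`).
-/

open Set Matroid
open scoped Matroid

namespace PaperLift

variable {α : Type} {β : Type}

/-- A circuit of a matroid: a minimal dependent set. -/
def Circuit (M : Matroid α) (C : Set α) : Prop :=
  M.Dep C ∧ ∀ D, D ⊂ C → M.Indep D

/-- The rank of a set in a matroid: the supremum of cardinalities of independent subsets. -/
noncomputable def rk (M : Matroid α) (X : Set α) : ℕ :=
  sSup {n | ∃ I, M.Indep I ∧ I ⊆ X ∧ I.ncard = n}

/-- The rank of a matroid. -/
noncomputable def rank (M : Matroid α) : ℕ := rk M M.E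

/-- Deletion of a set from a matroid. -/
def delete (M : Matroid α) (D : Set α) : Matroid α := M ↾ (M.E \ D)

/-- Contraction of a set in a matroid, defined by duality. -/
noncomputable def contract (M : Matroid α) (C : Set α) : Matroid α := ((M✶) ↾ (M.E \ C))✶

/-- A hyperplane: a maximal proper flat. -/
def Hyperplane (M : Matroid α) (H : Set α) : Prop :=
  M.IsFlat H ∧ H ≠ M.E ∧ ∀ F, M.IsFlat F → H ⊂ F → F = M.E

/-- A circuit-hyperplane: a circuit that is also a hyperplane. -/
def CircuitHyperplane (M : Matroid α) (C : Set α) : Prop :=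
  Circuit M C ∧ Hyperplane M C

/-- `L` is a lift of `M`: there is a matroid `K` on a ground set `E ∪ F`, with `F` disjoint
from `E = M.E`, such that `M = K / F` and `L = K \ F` (up to the canonical embedding). -/
def IsLiftOf (L M : Matroid α) : Prop :=
  L.E = M.E ∧ ∃ (β : Type) (K : Matroid (α ⊕ β)) (F : Set (α ⊕ β)),
    Disjoint (Sum.inl '' M.E) F ∧ K.E = Sum.inl '' M.E ∪ F ∧
    contract K F = M.map Sum.inl Sum.inl_injective.injOn ∧
    delete K F = L.map Sum.inl Sum.inl_injective.injOn

/-- `N`, a matroid whose ground set is the set of circuits of `M`, satisfies the lift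
condition for `M`. -/
def LiftCondition (M : Matroid α) (N : Matroid (Set α)) : Prop :=
  N.E = {C | Circuit M C} ∧
  ∀ C₁ C₂, Circuit M C₁ → Circuit M C₂ →
    (C₁ ∪ C₂).ncard = rk M (C₁ ∪ C₂) + 2 →
    ∀ C, Circuit M C → C ⊆ C₁ ∪ C₂ → C ∈ N.closure {C₁, C₂}

/-- `L` has the rank function of the lift `M^N` of `M` constructed from `N`. -/
def IsLiftMatroid (M : Matroid α) (N : Matroid (Set α)) (L : Matroid α) : Prop :=
  L.E = M.E ∧ ∀ X ⊆ M.E, rk L X = rk M X + rk N {C | Circuit M C ∧ C ⊆ X}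

/-- Matroid isomorphism: a bijection between ground sets preserving independence
in both directions. -/
def Iso (M : Matroid α) (N : Matroid β) : Prop :=
  ∃ e : α → β, InjOn e M.E ∧ e '' M.E = N.E ∧ ∀ I ⊆ M.E, (M.Indep I ↔ N.Indep (e '' I))

/-- Representability of a matroid over a field `F`. -/
def Representable (M : Matroid α) (F : Type) [Field F] : Prop :=
  ∃ (W : Type) (_ : AddCommGroup W) (_ : Module F W) (φ : α → W),
    ∀ I ⊆ M.E, (M.Indep I ↔ InjOn φ I ∧ LinearIndependent F (fun e : I => φ e))

/-- A rank-`r` matroid is sparse paving if every `r`-element subset of the ground set is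
either a base or a circuit-hyperplane. -/
def SparsePaving (M : Matroid α) : Prop :=
  ∀ S ⊆ M.E, S.ncard = rank M → (M.IsBase S ∨ CircuitHyperplane M S)

/-- A perfect collection of circuits. -/
def Perfect (M : Matroid α) (Cs : Set (Set α)) : Prop :=
  Cs.Finite ∧ (∀ C ∈ Cs, Circuit M C) ∧
  (⋃₀ Cs).ncard = rk M (⋃₀ Cs) + Cs.ncard ∧
  ∀ C ∈ Cs, ¬ C ⊆ ⋃₀ (Cs \ {C})

/-- A linear class of circuits. -/
def LinearClass (M : Matroid α) (𝒞 : Set (Set α)) : Prop :=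
  (∀ C ∈ 𝒞, Circuit M C) ∧
  ∀ C₁ ∈ 𝒞, ∀ C₂ ∈ 𝒞, (C₁ ∪ C₂).ncard = rk M (C₁ ∪ C₂) + 2 →
    ∀ C, Circuit M C → C ⊆ C₁ ∪ C₂ → C ∈ 𝒞

/-- The circulant sets `C_i ⊆ [2t]` from the construction of `K(r,t)`. -/
def Ci (r t i : ℕ) : Set ℕ :=
  (fun k => (k + 2 * (i - 1) - 1) % (2 * t) + 1) '' (Set.Icc 1 (r - 2))

/-- The family `𝒞'(r,t)`. -/
def CC' (r t : ℕ) : Set (Set ℕ) :=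
  (fun i => Ci r t i ∪ {2 * t + 1, 2 * t + 2}) '' (Set.Icc 1 t)

/-- The family `𝒞''(r,t)`. -/
def CC'' (r t : ℕ) : Set (Set ℕ) :=
  (fun i => Ci r t i ∪ Ci r t (i + 1)) '' (Set.Icc 1 (t - 1))

/-- `K` is the matroid `K(r,t)`: a rank-`r` matroid on `[2t+2]` in which every `r`-element
subset is a base or a circuit-hyperplane, whose circuit-hyperplanes are exactly the members
of `𝒞'(r,t) ∪ 𝒞''(r,t)`. -/
def IsKrt (r t : ℕ) (K : Matroid ℕ) : Prop :=
  K.E = Set.Icc 1 (2 * t + 2) ∧ rank K = r ∧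
  (∀ S ⊆ K.E, S.ncard = r → (K.IsBase S ∨ CircuitHyperplane K S)) ∧
  (∀ S, CircuitHyperplane K S ↔ S ∈ CC' r t ∪ CC'' r t)

/-- A group partition: a partition of the non-identity elements such that each part
together with the identity is a subgroup. -/
def GroupPartition (Γ : Type) [Group Γ] (𝒜 : Set (Set Γ)) : Prop :=
  (∀ A ∈ 𝒜, A.Nonempty) ∧ (⋃₀ 𝒜 = {(1 : Γ)}ᶜ) ∧
  (∀ A ∈ 𝒜, ∀ B ∈ 𝒜, A ≠ B → Disjoint A B) ∧
  (∀ A ∈ 𝒜, ∃ H : Subgroup Γ, (H : Set Γ) = insert 1 A)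

section General

variable {M : Matroid α} {B C D I S X Y : Set α}

lemma contract_eq_contract (M : Matroid α) (C : Set α) : contract M C = M ／ C := rfl

lemma delete_eq_delete (M : Matroid α) (D : Set α) : delete M D = M ＼ D := rfl

lemma circuit_iff_isCircuit : Circuit M C ↔ M.IsCircuit C :=
  isCircuit_iff_forall_ssubset.symm

lemma rk_eq_ncard_of_isBasis' (hI : M.IsBasis' I X) (hIfin : I.Finite) : rk M X = I.ncard := by
  have hle : ∀ n ∈ {n | ∃ J, M.Indep J ∧ J ⊆ X ∧ J.ncard = n}, n ≤ I.ncard := by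
    rintro _ ⟨J, hJ, hJX, rfl⟩
    refine ENat.toNat_le_toNat ?_ hIfin.encard_lt_top.ne
    exact hI.encard_eq_eRk ▸ hJ.encard_le_eRk_of_subset hJX
  exact le_antisymm (csSup_le ⟨_, I, hI.indep, hI.subset, rfl⟩ hle)
    (le_csSup ⟨_, hle⟩ ⟨I, hI.indep, hI.subset, rfl⟩)

lemma rk_eq_ncard_of_indep (hI : M.Indep I) (hIfin : I.Finite) : rk M I = I.ncard :=
  rk_eq_ncard_of_isBasis' hI.isBasis_self.isBasis' hIfin

lemma rk_eq_ncard_sub_one_of_isCircuit (hC : M.IsCircuit C) (hCfin : C.Finite) :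
    rk M C = C.ncard - 1 := by
  obtain ⟨e, he⟩ := hC.nonempty
  rw [rk_eq_ncard_of_isBasis' (hC.sdiff_singleton_isBasis he).isBasis' hCfin.sdiff,
    ncard_sdiff_singleton_of_mem he]

lemma rank_eq_ncard_of_isBase (hB : M.IsBase B) (hBfin : B.Finite) : rank M = B.ncard :=
  rk_eq_ncard_of_isBasis' hB.isBasis_ground.isBasis' hBfin

lemma rk_delete_of_disjoint (hXD : Disjoint X D) : rk (delete M D) X = rk M X := by
  simp only [rk, delete_eq_delete, delete_indep_iff]
  congr! 5 with _ J
  exact and_congr_left fun hJX ↦ and_iff_left (hXD.mono_left hJX.1)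

lemma rk_contract_of_isBase_subset (hC : M.Indep C) (hB : M.IsBase B) (hBfin : B.Finite)
    (hBY : B ⊆ Y ∪ C) (hYC : Disjoint Y C) : rk (contract M C) Y = B.ncard - C.ncard := by
  obtain ⟨I, hI, hCI⟩ := hC.subset_isBasis'_of_subset (subset_union_right (s := Y))
  have hIB : M.IsBase I :=
    hI.isBasis_inter_ground.isBase_of_isBase_subset hB (subset_inter hBY hB.subset_ground)
  have hIfin : I.Finite := hB.finite_of_finite hBfin hIB
  have hbasis := hI.contract_isBasis_of_indep (J := C)
    (by rw [union_eq_self_of_subset_right hCI]; exact hI.indep)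
  rw [union_sdiff_right, hYC.sdiff_eq_left] at hbasis
  rw [contract_eq_contract, rk_eq_ncard_of_isBasis' hbasis hIfin.sdiff,
    ncard_sdiff hCI (hIfin.subset hCI), hIB.ncard_eq_ncard_of_isBase hB]

lemma SparsePaving.indep_of_ncard_lt [M.Finite] (hM : SparsePaving M) (hS : S ⊆ M.E)
    (hlt : S.ncard < rank M) : M.Indep S := by
  obtain ⟨B, hB⟩ := M.exists_isBase
  have hrank : rank M ≤ M.E.ncard :=
    rank_eq_ncard_of_isBase hB hB.finite ▸ ncard_le_ncard hB.subset_ground M.ground_finite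
  obtain ⟨T, hST, hTE, hT⟩ := exists_subsuperset_card_eq hS hlt.le hrank
  rcases hM T hTE hT with hT | hT
  · exact hT.indep.subset hST
  · exact hT.1.2 S (hST.ssubset_of_ne (by rintro rfl; omega))

end General

section Circulant

variable {r t i : ℕ}

lemma Ci_subset_Icc (ht : 0 < t) : Ci r t i ⊆ Icc 1 (2 * t) := by
  rintro _ ⟨k, -, rfl⟩
  have := Nat.mod_lt (k + 2 * (i - 1) - 1) (show 0 < 2 * t by omega)
  simp only [mem_Icc]
  omega

lemma Ci_union_Ci_subset_Icc {j : ℕ} (ht : 0 < t) : Ci r t i ∪ Ci r t j ⊆ Icc 1 (2 * t) :=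
  union_subset (Ci_subset_Icc ht) (Ci_subset_Icc ht)

lemma injOn_Icc_circulant (i : ℕ) {n : ℕ} (hn : n ≤ 2 * t) :
    InjOn (fun k => (k + 2 * (i - 1) - 1) % (2 * t) + 1) (Icc 1 n) := by
  intro a ha b hb h
  simp only [mem_Icc] at ha hb
  have hmod : (a - 1 + 2 * (i - 1)) % (2 * t) = (b - 1 + 2 * (i - 1)) % (2 * t) := by
    simp only at h
    rw [show a - 1 + 2 * (i - 1) = a + 2 * (i - 1) - 1 by omega,
      show b - 1 + 2 * (i - 1) = b + 2 * (i - 1) - 1 by omega]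
    omega
  have := (Nat.ModEq.add_right_cancel' _ hmod).eq_of_lt_of_lt (by omega) (by omega)
  omega

lemma Ci_one (hrt : r ≤ 2 * t + 2) : Ci r t 1 = Icc 1 (r - 2) := by
  ext x
  simp only [Ci, mem_image, mem_Icc]
  constructor
  · rintro ⟨k, hk, rfl⟩
    rw [Nat.mod_eq_of_lt (by omega)]
    omega
  · exact fun hx ↦ ⟨x, hx, by rw [Nat.mod_eq_of_lt (by omega)]; omega⟩

lemma Ci_last (hr : 4 ≤ r) (hrt : r ≤ 2 * t + 2) :
    Ci r t t = Icc 1 (r - 4) ∪ {2 * t - 1, 2 * t} := by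
  ext x
  simp only [Ci, mem_image, mem_Icc, mem_union, mem_insert_iff, mem_singleton_iff]
  constructor
  · rintro ⟨k, hk, rfl⟩
    rcases lt_or_ge (k + 2 * (t - 1) - 1) (2 * t) with h | h
    · rw [Nat.mod_eq_of_lt h]; omega
    · rw [Nat.mod_eq_sub_mod h, Nat.mod_eq_of_lt (by omega)]; omega
  · rintro (hx | rfl | rfl)
    · refine ⟨x + 2, by omega, ?_⟩
      rw [show x + 2 + 2 * (t - 1) - 1 = x - 1 + 2 * t by omega, Nat.add_mod_right,
        Nat.mod_eq_of_lt (by omega)]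
      omega
    · exact ⟨1, by omega, by rw [Nat.mod_eq_of_lt (by omega)]; omega⟩
    · exact ⟨2, by omega, by rw [Nat.mod_eq_of_lt (by omega)]; omega⟩

lemma Ci_union_Ci_succ (hr : 4 ≤ r) (hi : 1 ≤ i) :
    Ci r t i ∪ Ci r t (i + 1) = (fun k => (k + 2 * (i - 1) - 1) % (2 * t) + 1) '' Icc 1 r := by
  have hsucc : Ci r t (i + 1) = (fun k => (k + 2 * (i - 1) - 1) % (2 * t) + 1) '' Icc 3 r := by
    ext x
    simp only [Ci, mem_image, mem_Icc]
    constructor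
    · rintro ⟨k, hk, rfl⟩
      exact ⟨k + 2, by omega,
        by rw [show k + 2 + 2 * (i - 1) - 1 = k + 2 * (i + 1 - 1) - 1 by omega]⟩
    · rintro ⟨k, hk, rfl⟩
      exact ⟨k - 2, by omega,
        by rw [show k - 2 + 2 * (i + 1 - 1) - 1 = k + 2 * (i - 1) - 1 by omega]⟩
  rw [Ci, hsucc, ← image_union]
  congr 1
  ext k
  simp only [mem_union, mem_Icc]
  omega

lemma ncard_Ci_union_Ci_succ (hr : 4 ≤ r) (hrt : r ≤ 2 * t) (hi : 1 ≤ i) :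
    (Ci r t i ∪ Ci r t (i + 1)).ncard = r := by
  rw [Ci_union_Ci_succ hr hi, (injOn_Icc_circulant i hrt).ncard_image, ncard_Icc_nat]
  omega

lemma Ci_one_union_Ci_last (hr : 4 ≤ r) (hrt : r ≤ 2 * t + 2) :
    Ci r t 1 ∪ Ci r t t = Icc 1 (r - 2) ∪ {2 * t - 1, 2 * t} := by
  rw [Ci_one hrt, Ci_last hr hrt]
  ext x
  simp only [mem_union, mem_Icc, mem_insert_iff, mem_singleton_iff]
  omega

lemma ncard_Ci_one_union_Ci_last (hr : 4 ≤ r) (hrt : r + 2 ≤ 2 * t) :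
    (Ci r t 1 ∪ Ci r t t).ncard = r := by
  have hdisj : Disjoint (Icc 1 (r - 2)) {2 * t - 1, 2 * t} := by
    simp only [disjoint_insert_right, disjoint_singleton_right, mem_Icc]
    omega
  rw [Ci_one_union_Ci_last hr (by omega), ncard_union_eq hdisj (finite_Icc _ _),
    ncard_Icc_nat, ncard_pair (by omega)]
  omega

lemma Ci_one_union_Ci_last_ne (hr : 4 ≤ r) (hrt : r + 2 ≤ 2 * t) (hi : 1 ≤ i) (hit : i < t) :
    Ci r t 1 ∪ Ci r t t ≠ Ci r t i ∪ Ci r t (i + 1) := by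
  rw [Ci_one_union_Ci_last hr (by omega), Ci_union_Ci_succ hr hi]
  intro h
  have hmem : ∀ k ∈ Icc 1 r, k + 2 * (i - 1) - 1 < 2 * t →
      k + 2 * (i - 1) ∈ Icc 1 (r - 2) ∪ {2 * t - 1, 2 * t} := fun k hk hlt ↦ by
    have := h ▸ mem_image_of_mem _ hk
    rwa [Nat.mod_eq_of_lt hlt, Nat.sub_add_cancel (by simp only [mem_Icc] at hk; omega)] at this
  simp only [mem_union, mem_Icc, mem_insert_iff, mem_singleton_iff] at hmem
  rcases le_or_gt (2 * i) r with h2i | h2i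
  · have := hmem (r + 1 - 2 * i) (by omega) (by omega)
    omega
  · have := hmem 1 (by omega) (by omega)
    omega

lemma disjoint_pair_of_subset_Icc {A : Set ℕ} (hA : A ⊆ Icc 1 (2 * t)) :
    Disjoint A {2 * t + 1, 2 * t + 2} := by
  rw [disjoint_left]
  rintro x hx (rfl | rfl) <;> (have := hA hx; simp only [mem_Icc] at this; omega)

lemma notMem_CC'_union_CC'' {S : Set ℕ} (ht : 0 < t) (h₁ : 2 * t + 1 ∈ S)
    (h₂ : 2 * t + 2 ∉ S) : S ∉ CC' r t ∪ CC'' r t := by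
  rintro (⟨j, -, rfl⟩ | ⟨j, -, rfl⟩)
  · exact h₂ (Or.inr (Or.inr rfl))
  · exact disjoint_left.1 (disjoint_pair_of_subset_Icc (Ci_union_Ci_subset_Icc ht)) h₁
      (Or.inl rfl)

lemma Ci_one_union_Ci_last_notMem (hr : 4 ≤ r) (hrt : r + 2 ≤ 2 * t) :
    Ci r t 1 ∪ Ci r t t ∉ CC' r t ∪ CC'' r t := by
  rintro (⟨j, -, hj⟩ | ⟨j, hj, hj'⟩)
  · have : 2 * t + 2 ∈ Ci r t 1 ∪ Ci r t t := hj ▸ Or.inr (Or.inr rfl)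
    exact disjoint_left.1 (disjoint_pair_of_subset_Icc (Ci_union_Ci_subset_Icc (by omega)))
      this (Or.inr rfl)
  · simp only [mem_Icc] at hj
    exact Ci_one_union_Ci_last_ne hr hrt hj.1 (by omega) hj'.symm

end Circulant

namespace IsKrt

variable {r t i : ℕ} {K : Matroid ℕ} {A B S : Set ℕ}

lemma finite (hK : IsKrt r t K) : K.Finite :=
  ⟨hK.1 ▸ finite_Icc _ _⟩

lemma sparsePaving (hK : IsKrt r t K) : SparsePaving K := by
  intro S hS hcard
  exact hK.2.2.1 S hS (hK.2.1 ▸ hcard)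

lemma subset_ground_of_subset_Icc (hK : IsKrt r t K) (hA : A ⊆ Icc 1 (2 * t)) : A ⊆ K.E := by
  rw [hK.1]
  exact hA.trans (Icc_subset_Icc_right (by omega))

lemma pair_subset_ground (hK : IsKrt r t K) : {2 * t + 1, 2 * t + 2} ⊆ K.E := by
  rw [hK.1]
  rintro x (rfl | rfl) <;> simp only [mem_Icc] <;> omega

lemma indep_pair (hK : IsKrt r t K) (hr : 3 ≤ r) : K.Indep {2 * t + 1, 2 * t + 2} :=
  have := hK.finite
  hK.sparsePaving.indep_of_ncard_lt hK.pair_subset_ground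
    (by rw [ncard_pair (by omega), hK.2.1]; omega)

lemma isCircuit_of_mem (hK : IsKrt r t K) (hS : S ∈ CC' r t ∪ CC'' r t) : K.IsCircuit S :=
  circuit_iff_isCircuit.1 ((hK.2.2.2 S).2 hS).1

lemma isBase_of_notMem (hK : IsKrt r t K) (hSE : S ⊆ K.E) (hS : S.ncard = r)
    (hnot : S ∉ CC' r t ∪ CC'' r t) : K.IsBase S :=
  (hK.2.2.1 S hSE hS).resolve_right (mt (hK.2.2.2 S).1 hnot)

lemma circuit_contract_Ci (hK : IsKrt r t K) (hr : 3 ≤ r) (hi : 1 ≤ i) (hit : i ≤ t) :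
    Circuit (contract K {2 * t + 1, 2 * t + 2}) (Ci r t i) := by
  have hmem : Ci r t i ∪ {2 * t + 1, 2 * t + 2} ∈ CC' r t ∪ CC'' r t :=
    Or.inl ⟨i, ⟨hi, hit⟩, rfl⟩
  have hcirc := (hK.isCircuit_of_mem hmem).contract_sdiff_isCircuit (K := Ci r t i)
    ((nonempty_Icc.2 (by omega)).image _) subset_union_left
  rwa [union_sdiff_left,
    (disjoint_pair_of_subset_Icc (Ci_subset_Icc (by omega))).symm.sdiff_eq_left,
    ← contract_eq_contract, ← circuit_iff_isCircuit] at hcirc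

lemma rk_contract_pair_of_isBase_subset (hK : IsKrt r t K) (hr : 3 ≤ r) (hA : A ⊆ Icc 1 (2 * t))
    (hB : K.IsBase B) (hBA : B ⊆ A ∪ {2 * t + 1, 2 * t + 2}) :
    rk (contract K {2 * t + 1, 2 * t + 2}) A = r - 2 := by
  have := hK.finite
  rw [rk_contract_of_isBase_subset (hK.indep_pair hr) hB hB.finite hBA
    (disjoint_pair_of_subset_Icc hA), ncard_pair (by omega),
    ← rank_eq_ncard_of_isBase hB hB.finite, hK.2.1]

lemma rk_contract_of_ncard_eq (hK : IsKrt r t K) (hr : 3 ≤ r) (hA : A ⊆ Icc 1 (2 * t))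
    (hAcard : A.ncard = r) : rk (contract K {2 * t + 1, 2 * t + 2}) A = r - 2 := by
  obtain ⟨a, ha⟩ := nonempty_of_ncard_ne_zero (s := A) (by omega)
  have hdisj := disjoint_pair_of_subset_Icc hA
  have ht : 0 < t := by have := hA ha; simp only [mem_Icc] at this; omega
  have hnot : 2 * t + 1 ∉ A \ {a} := fun h ↦ disjoint_left.1 hdisj h.1 (Or.inl rfl)
  refine hK.rk_contract_pair_of_isBase_subset hr hA (B := insert (2 * t + 1) (A \ {a}))
    (hK.isBase_of_notMem ?_ ?_ ?_)
    (insert_subset (Or.inr (Or.inl rfl)) (sdiff_subset.trans subset_union_left))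
  · exact insert_subset (hK.pair_subset_ground (Or.inl rfl))
      (hK.subset_ground_of_subset_Icc (sdiff_subset.trans hA))
  · rw [ncard_insert_of_notMem hnot ((finite_Icc _ _).subset (sdiff_subset.trans hA)),
      ncard_sdiff_singleton_of_mem ha, hAcard]
    omega
  · refine notMem_CC'_union_CC'' ht (mem_insert _ _) ?_
    rintro (h | h)
    · omega
    · exact disjoint_left.1 hdisj h.1 (Or.inr rfl)

end IsKrt

theorem stmt10_general (r t : ℕ) (hr : 4 ≤ r) (hrt : r + 2 ≤ 2 * t)
    (K : Matroid ℕ) (hK : IsKrt r t K) (M L : Matroid ℕ)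
    (hM : M = contract K {2 * t + 1, 2 * t + 2})
    (hL : L = delete K {2 * t + 1, 2 * t + 2}) :
    (∀ i, 1 ≤ i → i < t →
      Circuit M (Ci r t i) ∧ Circuit M (Ci r t (i + 1)) ∧
        (Ci r t i ∪ Ci r t (i + 1)).ncard = rk M (Ci r t i ∪ Ci r t (i + 1)) + 2) ∧
    (Circuit M (Ci r t 1) ∧ Circuit M (Ci r t t) ∧
      (Ci r t 1 ∪ Ci r t t).ncard = rk M (Ci r t 1 ∪ Ci r t t) + 2) ∧
    (∀ i, 1 ≤ i → i < t →
      rk L (Ci r t i ∪ Ci r t (i + 1)) = rk M (Ci r t i ∪ Ci r t (i + 1)) + 1) ∧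
    rk L (Ci r t 1 ∪ Ci r t t) = rk M (Ci r t 1 ∪ Ci r t t) + 2 := by
  subst hM hL
  have hU (i : ℕ) : Ci r t i ∪ Ci r t (i + 1) ⊆ Icc 1 (2 * t) :=
    Ci_union_Ci_subset_Icc (by omega)
  have hW : Ci r t 1 ∪ Ci r t t ⊆ Icc 1 (2 * t) := Ci_union_Ci_subset_Icc (by omega)
  have hUcard (i : ℕ) (hi : 1 ≤ i) := ncard_Ci_union_Ci_succ (t := t) hr (by omega) hi
  have hWcard := ncard_Ci_one_union_Ci_last hr hrt
  have hrkU (i : ℕ) (hi : 1 ≤ i) := hK.rk_contract_of_ncard_eq (by omega) (hU i) (hUcard i hi)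
  have hrkW := hK.rk_contract_of_ncard_eq (by omega) hW hWcard
  have hWbase : K.IsBase (Ci r t 1 ∪ Ci r t t) := hK.isBase_of_notMem
    (hK.subset_ground_of_subset_Icc hW) hWcard (Ci_one_union_Ci_last_notMem hr hrt)
  refine ⟨fun i hi hit ↦ ⟨hK.circuit_contract_Ci (by omega) hi hit.le,
      hK.circuit_contract_Ci (by omega) (by omega) hit, by rw [hUcard i hi, hrkU i hi]; omega⟩,
    ⟨hK.circuit_contract_Ci (by omega) le_rfl (by omega),
      hK.circuit_contract_Ci (by omega) (by omega) le_rfl, by rw [hWcard, hrkW]; omega⟩,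
    fun i hi hit ↦ ?_, ?_⟩
  · have hUcirc : K.IsCircuit (Ci r t i ∪ Ci r t (i + 1)) :=
      hK.isCircuit_of_mem (Or.inr ⟨i, ⟨hi, by omega⟩, rfl⟩)
    rw [rk_delete_of_disjoint (disjoint_pair_of_subset_Icc (hU i)),
      rk_eq_ncard_sub_one_of_isCircuit hUcirc ((finite_Icc _ _).subset (hU i)), hUcard i hi,
      hrkU i hi]
    omega
  · rw [rk_delete_of_disjoint (disjoint_pair_of_subset_Icc hW),
      rk_eq_ncard_of_indep hWbase.indep ((finite_Icc _ _).subset hW), hWcard, hrkW]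
    omega

/-- The rank facts `(a)`–`(d)` about `M = K(r,t)/X` and `L = K(r,t) ∖ X`. -/
theorem stmt10 (r t : ℕ) (hr : 4 ≤ r) (ht : 3 ≤ t) (hrt : r + 2 ≤ 2 * t)
    (K : Matroid ℕ) (hK : IsKrt r t K) (M L : Matroid ℕ)
    (hM : M = contract K {2 * t + 1, 2 * t + 2})
    (hL : L = delete K {2 * t + 1, 2 * t + 2}) :
    (∀ i, 1 ≤ i → i < t →
      Circuit M (Ci r t i) ∧ Circuit M (Ci r t (i + 1)) ∧
        (Ci r t i ∪ Ci r t (i + 1)).ncard = rk M (Ci r t i ∪ Ci r t (i + 1)) + 2) ∧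
    (Circuit M (Ci r t 1) ∧ Circuit M (Ci r t t) ∧
      (Ci r t 1 ∪ Ci r t t).ncard = rk M (Ci r t 1 ∪ Ci r t t) + 2) ∧
    (∀ i, 1 ≤ i → i < t →
      rk L (Ci r t i ∪ Ci r t (i + 1)) = rk M (Ci r t i ∪ Ci r t (i + 1)) + 1) ∧
    rk L (Ci r t 1 ∪ Ci r t t) = rk M (Ci r t 1 ∪ Ci r t t) + 2 :=
  stmt10_general r t hr hrt K hK M L hM hL

end PaperLift
end

section
/- Let r ≥ 4 and t ≥ 3 be integers with r ≤ 2t−3, let h ≥ 1, and let i₁ < i₂ < … < i_h be distinct indices in [t]. If the intersection C_{i₁} ∩ C_{i₂} ∩ … ∩ C_{i_h} is nonempty, then |C_{i₁} ∩ C_{i₂} ∩ … ∩ C_{i_h}| ≤ r − 2h. -/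
/-! Under `z ↦ z.val + 1` the sets `C_i` are the arcs of length `r - 2` of the cycle
`ZMod (2t)` starting at the even residues `2(i - 1)`. Fix a common point `x` and let `A` be the
arc of the family whose start precedes `x` most closely. Every other arc of the family starts an
even number `δ ≥ 2` of steps before `A`, so it ends inside `A`, and the two residues right after
it lie in `A` but outside the intersection. Distinct even `δ` give disjoint pairs, so the
intersection misses at least `2(h - 1)` of the `r - 2` points of `A`. -/

open Set Matroid
open scoped Matroid

namespace PaperLift

variable {α : Type} {β : Type}

theorem card_range_sdiff_biUnion_pair (L : ℕ) (D : Finset ℕ)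
    (hD : ∀ δ ∈ D, 2 ≤ δ ∧ δ ≤ L) (hpar : ∀ δ ∈ D, ∀ δ' ∈ D, δ % 2 = δ' % 2) :
    (Finset.range L \ D.biUnion fun δ => {L - δ, L - δ + 1}).card = L - 2 * D.card := by
  have hsub : (D.biUnion fun δ => {L - δ, L - δ + 1}) ⊆ Finset.range L := by
    simp only [Finset.biUnion_subset, Finset.insert_subset_iff, Finset.singleton_subset_iff,
      Finset.mem_range]
    intro δ hδ
    have := hD δ hδ
    omega
  rw [Finset.card_sdiff_of_subset hsub, Finset.card_range, Finset.card_biUnion,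
    Finset.sum_const_nat fun δ _ => Finset.card_pair (by omega), mul_comm]
  intro δ hδ δ' hδ' hne
  have := hD δ hδ
  have := hD δ' hδ'
  have := hpar δ hδ δ' hδ'
  simp only [Function.onFun, Finset.disjoint_insert_left, Finset.disjoint_insert_right,
    Finset.disjoint_singleton, Finset.mem_insert, Finset.mem_singleton]
  omega

section CyclicArc

variable {n : ℕ} [NeZero n]

/-- The `L` consecutive residues `a, a + 1, …, a + L - 1` (all of `ZMod n` once `n ≤ L`). -/
def cyclicArc (a : ZMod n) (L : ℕ) : Set (ZMod n) := {y | (y - a).val < L}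

theorem mem_cyclicArc_iff_val_add {a y : ZMod n} {L : ℕ} (b : ZMod n) :
    y ∈ cyclicArc a L ↔ ((y - b).val + (b - a).val) % n < L := by
  change (y - a).val < L ↔ _
  rw [← ZMod.val_add, sub_add_sub_cancel]

theorem even_val_of_even (hn : Even n) {u : ZMod n} (hu : Even u) : Even u.val := by
  obtain ⟨c, rfl⟩ := hu
  rw [Nat.even_iff, ZMod.val_add, Nat.mod_mod_of_dvd _ (even_iff_two_dvd.mp hn)]
  omega

theorem val_sub_lt_of_mem_cyclicArc {a b x : ZMod n} {L : ℕ} (hx : x ∈ cyclicArc a L)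
    (hle : (x - b).val ≤ (x - a).val) : (b - a).val < L := by
  have h := ZMod.val_sub hle
  rw [sub_sub_sub_cancel_left] at h
  change (x - a).val < L at hx
  omega

/-- The residues `a + L` and `a + L + 1`, read off from an arbitrary base point `b`, lie
outside the arc. -/
theorem val_sub_add_val_sub_notMem_of_mem_cyclicArc {a b y : ZMod n} {L : ℕ} (hL : L + 2 ≤ n)
    (hy : y ∈ cyclicArc a L) : (y - b).val + (b - a).val ∉ ({L, L + 1} : Finset ℕ) := by
  rw [mem_cyclicArc_iff_val_add b] at hy
  intro h
  rw [Finset.mem_insert, Finset.mem_singleton] at h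
  rcases h with h | h <;> rw [h, Nat.mod_eq_of_lt (by omega)] at hy <;> omega

theorem ncard_biInter_cyclicArc_add_two_mul_card_le {ι : Type*} (hn : Even n) {L : ℕ}
    (hL : L + 2 ≤ n) {S : Finset ι} {a : ι → ZMod n} (ha : Set.InjOn a S)
    (hpar : ∀ i ∈ S, ∀ j ∈ S, Even (a i - a j)) (hS : S.Nonempty)
    (hX : (⋂ i ∈ S, cyclicArc (a i) L).Nonempty) :
    (⋂ i ∈ S, cyclicArc (a i) L).ncard + 2 * S.card ≤ L + 2 := by
  classical
  obtain ⟨x, hx⟩ := hX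
  set X := ⋂ i ∈ S, cyclicArc (a i) L
  have hmem : ∀ y ∈ X, ∀ i ∈ S, y ∈ cyclicArc (a i) L := fun y hy i hi =>
    Set.mem_iInter₂.mp hy i hi
  obtain ⟨i₀, hi₀, hmin⟩ := S.exists_min_image (fun i => (x - a i).val) hS
  set D := (S.erase i₀).image fun i => (a i₀ - a i).val
  have hD : ∀ δ ∈ D, 2 ≤ δ ∧ δ < L ∧ Even δ := by
    rw [Finset.forall_mem_image]
    intro i hi
    obtain ⟨hii₀, hiS⟩ := Finset.mem_erase.mp hi
    have hne : (a i₀ - a i).val ≠ 0 := by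
      rw [Ne, ZMod.val_eq_zero, sub_eq_zero]
      exact fun h => hii₀ (ha hiS hi₀ h.symm)
    have heven := even_val_of_even hn (hpar i₀ hi₀ i hiS)
    refine ⟨?_, val_sub_lt_of_mem_cyclicArc (hmem x hx i hiS) (hmin i hiS), heven⟩
    obtain ⟨k, hk⟩ := heven
    omega
  have hDcard : D.card = S.card - 1 := by
    rw [Finset.card_image_of_injOn, Finset.card_erase_of_mem hi₀]
    intro i hi j hj hij
    exact ha (Finset.mem_of_mem_erase hi) (Finset.mem_of_mem_erase hj)
      (sub_right_injective (ZMod.val_injective n hij))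
  have hmaps : ∀ y ∈ X, (y - a i₀).val ∈
      ((Finset.range L \ D.biUnion fun δ => {L - δ, L - δ + 1} : Finset ℕ) : Set ℕ) := by
    intro y hy
    simp only [Finset.coe_sdiff, Set.mem_sdiff, Finset.mem_coe, Finset.mem_range, D,
      Finset.mem_biUnion, Finset.mem_image, Finset.mem_insert, Finset.mem_singleton]
    refine ⟨hmem y hy i₀ hi₀, ?_⟩
    rintro ⟨_, ⟨i, hi, rfl⟩, hgap⟩
    have hout := val_sub_add_val_sub_notMem_of_mem_cyclicArc (b := a i₀) hL
      (hmem y hy i (Finset.mem_of_mem_erase hi))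
    have := hD _ (Finset.mem_image_of_mem _ hi)
    simp only [Finset.mem_insert, Finset.mem_singleton] at hout
    omega
  have hinj : Set.InjOn (fun y => (y - a i₀).val) X :=
    ((ZMod.val_injective n).comp (sub_left_injective (b := a i₀))).injOn
  have hcard : X.ncard ≤ L - 2 * D.card := by
    have hDpar : ∀ δ ∈ D, ∀ δ' ∈ D, δ % 2 = δ' % 2 := fun δ hδ δ' hδ' => by
      rw [Nat.even_iff.mp (hD δ hδ).2.2, Nat.even_iff.mp (hD δ' hδ').2.2]
    rw [← card_range_sdiff_biUnion_pair L D (fun δ hδ => ⟨(hD δ hδ).1, (hD δ hδ).2.1.le⟩) hDpar,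
      ← Set.ncard_coe_finset]
    exact Set.ncard_le_ncard_of_injOn _ hmaps hinj
  have := hS.card_pos
  have := (Set.ncard_pos (Set.toFinite X)).mpr ⟨x, hx⟩
  omega

end CyclicArc

theorem image_Icc_mod_eq_image_cyclicArc {n : ℕ} [NeZero n] {L c : ℕ} (hL : L ≤ n)
    (hc : c < n) :
    (fun k => (k + c - 1) % n + 1) '' Set.Icc 1 L =
      (fun z : ZMod n => z.val + 1) '' cyclicArc (c : ZMod n) L := by
  ext x
  simp only [Set.mem_image, Set.mem_Icc, cyclicArc, Set.mem_ofPred_eq]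
  constructor
  · rintro ⟨k, ⟨hk₁, hkL⟩, rfl⟩
    refine ⟨((k - 1 + c : ℕ) : ZMod n), ?_, ?_⟩
    · rw [Nat.cast_add, add_sub_cancel_right, ZMod.val_cast_of_lt (by omega)]
      omega
    · rw [ZMod.val_natCast, Nat.sub_add_comm hk₁]
  · rintro ⟨z, hz, rfl⟩
    refine ⟨(z - c).val + 1, ⟨by omega, hz⟩, ?_⟩
    have hz_val := ZMod.val_add (z - (c : ZMod n)) (c : ZMod n)
    rw [sub_add_cancel, ZMod.val_cast_of_lt hc] at hz_val
    rw [show (z - c).val + 1 + c - 1 = (z - c).val + c by omega, ← hz_val]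

theorem stmt11_general (r t : ℕ) (hr : 4 ≤ r) (hrt : r + 3 ≤ 2 * t)
    (s : Finset ℕ) (hs : ↑s ⊆ Set.Icc 1 t) (hne : s.Nonempty)
    (hint : (⋂ i ∈ (s : Set ℕ), Ci r t i).Nonempty) :
    (⋂ i ∈ (s : Set ℕ), Ci r t i).ncard + 2 * s.card ≤ r := by
  have : NeZero (2 * t) := ⟨by omega⟩
  have hsIcc : ∀ i ∈ s, 1 ≤ i ∧ i ≤ t := fun i hi => hs hi
  set a : ℕ → ZMod (2 * t) := fun i => ((2 * (i - 1) : ℕ) : ZMod (2 * t))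
  have hval : Function.Injective fun z : ZMod (2 * t) => z.val + 1 :=
    (add_left_injective 1).comp (ZMod.val_injective _)
  have hX : ⋂ i ∈ (s : Set ℕ), Ci r t i =
      (fun z : ZMod (2 * t) => z.val + 1) '' ⋂ i ∈ s, cyclicArc (a i) (r - 2) := by
    rw [Finset.set_biInter_coe, hval.injOn.image_biInter_eq hne]
    refine Set.iInter₂_congr fun i hi => image_Icc_mod_eq_image_cyclicArc (by omega) ?_
    have := hsIcc i hi
    omega
  have ha : Set.InjOn a s := fun i hi j hj hij => by
    have := hsIcc i hi; have := hsIcc j hj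
    have := congrArg ZMod.val hij
    simp only [a, ZMod.val_cast_of_lt (show 2 * (i - 1) < 2 * t by omega),
      ZMod.val_cast_of_lt (show 2 * (j - 1) < 2 * t by omega)] at this
    omega
  have hpar : ∀ i ∈ s, ∀ j ∈ s, Even (a i - a j) := fun i _ j _ => by
    simp only [a, Nat.cast_mul, Nat.cast_ofNat]
    exact (even_two_mul _).sub (even_two_mul _)
  rw [hX] at hint ⊢
  rw [Set.ncard_image_of_injective _ hval]
  have := ncard_biInter_cyclicArc_add_two_mul_card_le (even_two_mul t) (by omega) ha hpar hne
    (Set.image_nonempty.mp hint)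
  omega

/-- If the intersection of `h` distinct sets `C_i` is nonempty, then it has at most `r - 2h`
elements. -/
theorem stmt11 (r t : ℕ) (hr : 4 ≤ r) (ht : 3 ≤ t) (hrt : r + 3 ≤ 2 * t)
    (s : Finset ℕ) (hs : ↑s ⊆ Set.Icc 1 t) (hne : s.Nonempty)
    (hint : (⋂ i ∈ (s : Set ℕ), Ci r t i).Nonempty) :
    (⋂ i ∈ (s : Set ℕ), Ci r t i).ncard + 2 * s.card ≤ r :=
  stmt11_general r t hr hrt s hs hne hint

end PaperLift
end

section
/- Let F be a field, let A be a matrix over F with columns indexed by a set E, and let M be the column matroid of A (a subset of E is independent in M if and only if the corresponding family of columns is linearly independent). Let C₁, C₂ be circuits of M with |C₁ ∪ C₂| − r_M(C₁ ∪ C₂) = 2, and let C be a circuit of M with C ⊆ C₁ ∪ C₂. If x₁, x₂, x are vectors in the kernel of A whose supports are C₁, C₂, C respectively, then x lies in the linear span of {x₁, x₂}. -/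
/-!
Let `U = C₁ ∪ C₂` and let `I ⊆ U` be independent with `|I| = r(U)`. A kernel vector of `A`
supported in `U` is determined by its entries on `U \ I`, since a kernel vector supported on
the independent columns `I` vanishes; so these kernel vectors form a space of dimension at
most `|U| - r(U) = 2`, which contains `x₁`, `x₂` and `x`. Finally `x₁`, `x₂` are linearly
independent because `C₂ ⊄ C₁`: otherwise `U = C₁` would be a circuit, of nullity `1`.
-/

open Set Matroid
open scoped Matroid

open Module Function

namespace Matrix

variable {ι α F : Type*} [Fintype α] [Field F]

def kerSupported (A : Matrix ι α F) (U : Set α) : Submodule F (α → F) :=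
  LinearMap.ker A.mulVecLin ⊓ Submodule.pi Uᶜ fun _ => ⊥

variable {A : Matrix ι α F} {U I : Set α} {v : α → F}

theorem mem_kerSupported : v ∈ A.kerSupported U ↔ A *ᵥ v = 0 ∧ support v ⊆ U := by
  simp only [kerSupported, Submodule.mem_inf, LinearMap.mem_ker, mulVecLin_apply,
    Submodule.mem_pi, Set.mem_compl_iff, Submodule.mem_bot, support_subset_iff']

theorem eq_zero_of_mulVec_eq_zero_of_support_subset
    (hI : LinearIndependent F fun e : I => fun i => A i e) (hv : A *ᵥ v = 0)
    (hvI : support v ⊆ I) : v = 0 := by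
  classical
  have hsum : ∑ e : I, v e • (fun i => A i e) = 0 := by
    have hout : ∑ e : {a // a ∉ I}, v e • Aᵀ e = 0 :=
      Finset.sum_eq_zero fun e _ => by rw [notMem_support.1 fun h => e.2 (hvI h), zero_smul]
    rw [← hv, mulVec_eq_sum, ← Fintype.sum_subtype_add_sum_subtype (· ∈ I)]
    simp only [op_smul_eq_smul, hout, add_zero]
    rfl
  funext a
  by_cases ha : a ∈ I
  · exact Fintype.linearIndependent_iff.1 hI (fun e => v e) hsum ⟨a, ha⟩
  · exact support_subset_iff'.1 hvI a ha

theorem finrank_kerSupported_le (hIU : I ⊆ U)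
    (hI : LinearIndependent F fun e : I => fun i => A i e) :
    finrank F (A.kerSupported U) ≤ U.ncard - I.ncard := by
  classical
  let restrict : A.kerSupported U →ₗ[F] ((U \ I : Set α) → F) :=
    LinearMap.funLeft F F Subtype.val ∘ₗ (A.kerSupported U).subtype
  have hinj : Injective restrict := by
    rw [← LinearMap.ker_eq_bot, LinearMap.ker_eq_bot']
    rintro ⟨w, hw⟩ hrw
    rw [mem_kerSupported] at hw
    refine Subtype.ext (eq_zero_of_mulVec_eq_zero_of_support_subset hI hw.1 ?_)
    intro a ha
    by_contra haI
    exact ha (congrFun hrw ⟨a, hw.2 ha, haI⟩)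
  calc finrank F (A.kerSupported U) ≤ finrank F ((U \ I : Set α) → F) :=
        LinearMap.finrank_le_finrank_of_injective hinj
    _ = U.ncard - I.ncard := by
      rw [finrank_fintype_fun_eq_card, ← Nat.card_eq_fintype_card, Nat.card_coe_set_eq,
        Set.ncard_sdiff hIU]

end Matrix

theorem linearIndependent_pair_of_not_support_subset {α K : Type*} [Field K] {f g : α → K}
    (hf : f ≠ 0) (hgf : ¬ support g ⊆ support f) : LinearIndependent K ![f, g] := by
  obtain ⟨e, hge, hfe⟩ := Set.not_subset.1 hgf
  rw [LinearIndependent.pair_iff]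
  intro s t hst
  have ht : t = 0 := by
    simpa [notMem_support.1 hfe, mem_support.1 hge] using congrFun hst e
  subst ht
  exact ⟨(smul_eq_zero.1 (by simpa using hst)).resolve_right hf, rfl⟩

theorem Submodule.mem_span_pair_of_finrank_le_two {K V : Type*} [Field K] [AddCommGroup V]
    [Module K V] [FiniteDimensional K V] {W : Submodule K V} (hW : finrank K W ≤ 2)
    {x₁ x₂ x : V} (h : LinearIndependent K ![x₁, x₂]) (h₁ : x₁ ∈ W) (h₂ : x₂ ∈ W) (hx : x ∈ W) :
    x ∈ Submodule.span K {x₁, x₂} := by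
  have hspan : Submodule.span K {x₁, x₂} = W := by
    refine Submodule.eq_of_le_of_finrank_le (Submodule.span_le.2 (Set.pair_subset h₁ h₂)) ?_
    have hrange : Set.range ![x₁, x₂] = {x₁, x₂} := by simp [Set.pair_comm]
    rw [← hrange, finrank_span_eq_card h, Fintype.card_fin]
    exact hW
  exact hspan ▸ hx

namespace PaperLift

section Rank

variable {α : Type} {M : Matroid α} {C I X : Set α}

theorem Circuit.nonempty (hC : Circuit M C) : C.Nonempty :=
  hC.1.nonempty

variable [Finite α]

theorem bddAbove_indep_ncard (M : Matroid α) (X : Set α) :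
    BddAbove {n | ∃ I, M.Indep I ∧ I ⊆ X ∧ I.ncard = n} := by
  refine ⟨Nat.card α, ?_⟩
  rintro n ⟨I, -, -, rfl⟩
  exact Set.ncard_le_card I

theorem ncard_le_rk (hI : M.Indep I) (hIX : I ⊆ X) : I.ncard ≤ rk M X :=
  le_csSup (bddAbove_indep_ncard M X) ⟨I, hI, hIX, rfl⟩

theorem exists_indep_ncard_eq_rk (M : Matroid α) (X : Set α) :
    ∃ I, M.Indep I ∧ I ⊆ X ∧ I.ncard = rk M X :=
  Nat.sSup_mem (s := {n | ∃ I, M.Indep I ∧ I ⊆ X ∧ I.ncard = n})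
    ⟨0, ∅, M.empty_indep, Set.empty_subset X, Set.ncard_empty α⟩ (bddAbove_indep_ncard M X)

theorem Circuit.ncard_le_rk_add_one (hC : Circuit M C) : C.ncard ≤ rk M C + 1 := by
  obtain ⟨e, he⟩ := hC.nonempty
  have hind : M.Indep (C \ {e}) := hC.2 _ (Set.sdiff_singleton_ssubset.2 he)
  have := ncard_le_rk hind Set.sdiff_subset
  rw [Set.ncard_sdiff_singleton_of_mem he] at this
  have := (Set.ncard_pos (Set.toFinite C)).2 ⟨e, he⟩
  omega

end Rank

theorem stmt15_general {ι α : Type} [Fintype α] (F : Type) [Field F]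
    (A : Matrix ι α F) (M : Matroid α)
    (hMI : ∀ I : Set α,
      M.Indep I ↔ LinearIndependent F (fun e : I => fun i => A i (e : α)))
    (C₁ C₂ C : Set α) (h₁ : Circuit M C₁)
    (hmod : (C₁ ∪ C₂).ncard = rk M (C₁ ∪ C₂) + 2)
    (hCsub : C ⊆ C₁ ∪ C₂)
    (x₁ x₂ x : α → F)
    (hx₁ : A.mulVec x₁ = 0) (hx₂ : A.mulVec x₂ = 0) (hx : A.mulVec x = 0)
    (hs₁ : {e | x₁ e ≠ 0} = C₁) (hs₂ : {e | x₂ e ≠ 0} = C₂) (hsx : {e | x e ≠ 0} = C) :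
    x ∈ Submodule.span F {x₁, x₂} := by
  change support x₁ = C₁ at hs₁
  change support x₂ = C₂ at hs₂
  change support x = C at hsx
  obtain ⟨I, hI, hIU, hIrk⟩ := exists_indep_ncard_eq_rk M (C₁ ∪ C₂)
  have hker : finrank F (A.kerSupported (C₁ ∪ C₂)) ≤ 2 :=
    (Matrix.finrank_kerSupported_le hIU ((hMI I).1 hI)).trans (by omega)
  have hC₂C₁ : ¬ C₂ ⊆ C₁ := fun hsub => by
    have := h₁.ncard_le_rk_add_one
    rw [Set.union_eq_left.2 hsub] at hmod
    omega
  have hx₁0 : x₁ ≠ 0 := support_nonempty_iff.1 (hs₁.symm ▸ h₁.nonempty)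
  refine Submodule.mem_span_pair_of_finrank_le_two hker
    (linearIndependent_pair_of_not_support_subset hx₁0 (hs₁.symm ▸ hs₂.symm ▸ hC₂C₁)) ?_ ?_ ?_
  · exact Matrix.mem_kerSupported.2 ⟨hx₁, hs₁.trans_subset Set.subset_union_left⟩
  · exact Matrix.mem_kerSupported.2 ⟨hx₂, hs₂.trans_subset Set.subset_union_right⟩
  · exact Matrix.mem_kerSupported.2 ⟨hx, hsx.trans_subset hCsub⟩

/-- For the column matroid of a matrix `A`, a kernel vector supported on a circuit contained
in the union of a modular pair of circuits lies in the span of kernel vectors supported on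
those two circuits. -/
theorem stmt15 {ι α : Type} [Fintype α] (F : Type) [Field F]
    (A : Matrix ι α F) (M : Matroid α) (hME : M.E = Set.univ)
    (hMI : ∀ I : Set α,
      M.Indep I ↔ LinearIndependent F (fun e : I => fun i => A i (e : α)))
    (C₁ C₂ C : Set α) (h₁ : Circuit M C₁) (h₂ : Circuit M C₂)
    (hmod : (C₁ ∪ C₂).ncard = rk M (C₁ ∪ C₂) + 2)
    (hC : Circuit M C) (hCsub : C ⊆ C₁ ∪ C₂)
    (x₁ x₂ x : α → F)
    (hx₁ : A.mulVec x₁ = 0) (hx₂ : A.mulVec x₂ = 0) (hx : A.mulVec x = 0)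
    (hs₁ : {e | x₁ e ≠ 0} = C₁) (hs₂ : {e | x₂ e ≠ 0} = C₂) (hsx : {e | x e ≠ 0} = C) :
    x ∈ Submodule.span F {x₁, x₂} :=
  stmt15_general F A M hMI C₁ C₂ C h₁ hmod hCsub x₁ x₂ x hx₁ hx₂ hx hs₁ hs₂ hsx

end PaperLift
end

section
/- Let Γ be a finite group with identity ε and let 𝒜 be a nontrivial group partition of Γ. If every two elements α, β ∈ Γ that lie in different parts of 𝒜 commute, then Γ is abelian. -/
open Set Matroid
open scoped Matroid

namespace PaperLift

variable {α : Type} {β : Type}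

namespace GroupPartition

variable {Γ : Type} [Group Γ] {𝒜 : Set (Set Γ)}

theorem exists_mem_of_ne_one (h : GroupPartition Γ 𝒜) {x : Γ} (hx : x ≠ 1) :
    ∃ A ∈ 𝒜, x ∈ A :=
  Set.mem_sUnion.mp (h.2.1 ▸ hx : x ∈ ⋃₀ 𝒜)

theorem one_notMem (h : GroupPartition Γ 𝒜) {A : Set Γ} (hA : A ∈ 𝒜) : (1 : Γ) ∉ A :=
  fun h1 => by simpa [h.2.1] using Set.mem_sUnion_of_mem h1 hA

/-- The part of `a * c` differs from that of `a`, since otherwise `c = a⁻¹ * (a * c)` would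
lie in the subgroup `A ∪ {1}`. -/
theorem exists_mem_mul_of_mem_of_mem (h : GroupPartition Γ 𝒜) {A B : Set Γ} (hA : A ∈ 𝒜)
    (hB : B ∈ 𝒜) (hAB : A ≠ B) {a c : Γ} (ha : a ∈ A) (hc : c ∈ B) :
    ∃ E ∈ 𝒜, E ≠ A ∧ a * c ∈ E := by
  obtain ⟨H, hH⟩ := h.2.2.2 A hA
  have haH : a ∈ H := by rw [← SetLike.mem_coe, hH]; exact Set.mem_insert_of_mem 1 ha
  have hcH : c ∉ H := by
    rw [← SetLike.mem_coe, hH]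
    rintro (rfl | hcA)
    · exact h.one_notMem hB hc
    · exact Set.disjoint_left.mp (h.2.2.1 A hA B hB hAB) hcA hc
  have hacH : a * c ∉ H := fun hac => hcH (by simpa using H.mul_mem (H.inv_mem haH) hac)
  have hac1 : a * c ≠ 1 := fun h1 => hacH (h1 ▸ H.one_mem)
  obtain ⟨E, hE, hacE⟩ := h.exists_mem_of_ne_one hac1
  refine ⟨E, hE, fun hEA => hacH ?_, hacE⟩
  rw [← SetLike.mem_coe, hH]
  exact Set.mem_insert_of_mem 1 (hEA ▸ hacE)

end GroupPartition

theorem stmt16_general (Γ : Type) [Group Γ] (𝒜 : Set (Set Γ))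
    (hpart : GroupPartition Γ 𝒜) (hnt : Set.Nontrivial 𝒜)
    (hcomm : ∀ A ∈ 𝒜, ∀ B ∈ 𝒜, A ≠ B → ∀ a ∈ A, ∀ b ∈ B, a * b = b * a) :
    ∀ x y : Γ, x * y = y * x := by
  intro x y
  rcases eq_or_ne x 1 with rfl | hx
  · simp
  rcases eq_or_ne y 1 with rfl | hy
  · simp
  obtain ⟨A, hA, hxA⟩ := hpart.exists_mem_of_ne_one hx
  obtain ⟨B, hB, hyB⟩ := hpart.exists_mem_of_ne_one hy
  rcases ne_or_eq A B with hAB | rfl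
  · exact hcomm A hA B hB hAB x hxA y hyB
  -- `x` commutes with `c` and `y * c`, which lie outside `A`, hence with `y = (y * c) * c⁻¹`.
  obtain ⟨C, hC, hCA⟩ := hnt.exists_ne A
  obtain ⟨c, hc⟩ := hpart.1 C hC
  obtain ⟨E, hE, hEA, hyc⟩ := hpart.exists_mem_mul_of_mem_of_mem hA hC hCA.symm hyB hc
  have hxc : Commute x c := hcomm A hA C hC hCA.symm x hxA c hc
  have hxyc : Commute x (y * c) := hcomm A hA E hE hEA.symm x hxA (y * c) hyc
  simpa using (hxyc.mul_right hxc.inv_right).eq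

/-- If elements in different parts of a nontrivial group partition always commute, then the
group is abelian. -/
theorem stmt16 (Γ : Type) [Group Γ] [Finite Γ] (𝒜 : Set (Set Γ))
    (hpart : GroupPartition Γ 𝒜) (hnt : Set.Nontrivial 𝒜)
    (hcomm : ∀ A ∈ 𝒜, ∀ B ∈ 𝒜, A ≠ B → ∀ a ∈ A, ∀ b ∈ B, a * b = b * a) :
    ∀ x y : Γ, x * y = y * x :=
  stmt16_general Γ 𝒜 hpart hnt hcomm

end PaperLift
end
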